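/- arXiv:2412.09837 — 2 statements merged into one kernel-verified Lean document; each statement's English description precedes it below -/
import Mathlib

section
/- Let G and H be finite connected graphs. If S is a monophonic position set of the Cartesian product G □ H, then the projection π_H(S) = {h ∈ V(H) : (g,h) ∈ S for some g ∈ V(G)} is a monophonic position set of H. -/
/-!
Suppose a monophonic path of `H` met `π_H(S)` in three vertices. Along the path one of them, `y`,
lies between the other two, `x` and `z`, so the monophonic subpath `q` from `x` to `z` passes
through `y`, and `x`, `z` are not adjacent. Lift them to `(g_x, x), (g_y, y), (g_z, z) ∈ S`. Go
from `(g_x, x)` to `(g_y, x)` along a monophonic path of `G` in the layer of `x`, then along the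
copy of `q` in the fibre of `g_y`, then to `(g_z, z)` along a monophonic path of `G` in the layer
of `z`. This walk of `G □ H` is monophonic: away from the two corners, an edge of `G □ H`
between different legs can only join the layers of `x` and `z`, i.e. come from an edge `xz` of
`H`. It contains three vertices of `S`, a contradiction.
-/

open SimpleGraph

/-- A walk is *monophonic* if it is an induced path: it is a path and the only
edges of the graph between vertices of the walk are the edges of the walk. -/
def SimpleGraph.Walk.IsMonophonic {V : Type*} {G : SimpleGraph V} {u v : V}
    (p : G.Walk u v) : Prop :=
  p.IsPath ∧ ∀ a b : V, a ∈ p.support → b ∈ p.support → G.Adj a b → p.toSubgraph.Adj a b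

/-- A set `S` is a *monophonic position set* if no monophonic path contains
more than two vertices of `S`. -/
def SimpleGraph.IsMPSet {V : Type*} (G : SimpleGraph V) (S : Set V) : Prop :=
  ∀ ⦃u v : V⦄ (p : G.Walk u v), p.IsMonophonic → ({x ∈ S | x ∈ p.support}).ncard ≤ 2

/-- The *monophonic position number*: the largest cardinality of a monophonic
position set. -/
noncomputable def SimpleGraph.mpNum {V : Type*} (G : SimpleGraph V) : ℕ :=
  sSup {n | ∃ S : Set V, G.IsMPSet S ∧ S.ncard = n}

namespace SimpleGraph.Walk

section

variable {V : Type*} {G : SimpleGraph V} {u v w x y z : V}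

theorem isMonophonic_iff {p : G.Walk u v} : p.IsMonophonic ↔ p.IsPath ∧ p.IsChordless := by
  simp only [IsMonophonic, isChordless_iff_forall_mem_edges, adj_toSubgraph_iff_mem_edges]

theorem IsMonophonic.isPath {p : G.Walk u v} (hp : p.IsMonophonic) : p.IsPath := hp.1

theorem IsMonophonic.mem_edges {p : G.Walk u v} (hp : p.IsMonophonic) (hx : x ∈ p.support)
    (hy : y ∈ p.support) (hxy : G.Adj x y) : s(x, y) ∈ p.edges :=
  (isMonophonic_iff.mp hp).2.mem_edges hx hy hxy

theorem IsPath.eq_of_mem_support_append {p : G.Walk u v} {q : G.Walk v w}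
    (h : (p.append q).IsPath) (hp : x ∈ p.support) (hq : x ∈ q.support) : x = v := by
  by_contra hxv
  exact h.ne_of_mem_support_of_append hxv hp hq rfl

theorem IsMonophonic.append {p : G.Walk u v} {q : G.Walk v w} (hp : p.IsMonophonic)
    (hq : q.IsMonophonic) (hdisj : ∀ a ∈ p.support, a ∈ q.support → a = v)
    (hadj : ∀ a ∈ p.support, ∀ b ∈ q.support, G.Adj a b → a = v ∨ b = v) :
    (p.append q).IsMonophonic := by
  have hpath : (p.append q).IsPath := by
    rw [isPath_def, support_append, List.nodup_append]
    refine ⟨hp.isPath.support_nodup, (List.tail_sublist _).nodup hq.isPath.support_nodup,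
      fun a ha b hb hab => ?_⟩
    subst hab
    have hnd := hq.isPath.support_nodup
    rw [← cons_tail_support] at hnd
    exact (List.nodup_cons.mp hnd).1 (hdisj a ha (List.mem_of_mem_tail hb) ▸ hb)
  refine isMonophonic_iff.mpr ⟨hpath, isChordless_iff_forall_mem_edges.mpr ?_⟩
  intro a b ha hb hab
  rw [edges_append, List.mem_append]
  rw [mem_support_append_iff] at ha hb
  rcases ha with ha | ha <;> rcases hb with hb | hb
  · exact .inl (hp.mem_edges ha hb hab)
  · rcases hadj a ha b hb hab with rfl | rfl
    · exact .inr (hq.mem_edges q.start_mem_support hb hab)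
    · exact .inl (hp.mem_edges ha p.end_mem_support hab)
  · rcases hadj b hb a ha hab.symm with rfl | rfl
    · exact .inr (hq.mem_edges ha q.start_mem_support hab)
    · exact .inl (hp.mem_edges p.end_mem_support hb hab)
  · exact .inr (hq.mem_edges ha hb hab)

theorem IsMonophonic.of_append_left {p : G.Walk u v} {q : G.Walk v w}
    (h : (p.append q).IsMonophonic) : p.IsMonophonic := by
  refine isMonophonic_iff.mpr ⟨h.isPath.of_append_left,
    isChordless_iff_forall_mem_edges.mpr fun a b ha hb hab => ?_⟩
  have he := h.mem_edges (by simp [ha]) (by simp [hb]) hab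
  rw [edges_append, List.mem_append] at he
  refine he.resolve_right fun he => hab.ne ?_
  exact (h.isPath.eq_of_mem_support_append ha (q.fst_mem_support_of_mem_edges he)).trans
    (h.isPath.eq_of_mem_support_append hb (q.snd_mem_support_of_mem_edges he)).symm

theorem IsMonophonic.of_append_right {p : G.Walk u v} {q : G.Walk v w}
    (h : (p.append q).IsMonophonic) : q.IsMonophonic := by
  refine isMonophonic_iff.mpr ⟨h.isPath.of_append_right,
    isChordless_iff_forall_mem_edges.mpr fun a b ha hb hab => ?_⟩
  have he := h.mem_edges (by simp [ha]) (by simp [hb]) hab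
  rw [edges_append, List.mem_append] at he
  refine he.resolve_left fun he => hab.ne ?_
  exact (h.isPath.eq_of_mem_support_append (p.fst_mem_support_of_mem_edges he) ha).trans
    (h.isPath.eq_of_mem_support_append (p.snd_mem_support_of_mem_edges he) hb).symm

theorem IsMonophonic.of_isSubwalk {p : G.Walk u v} {q : G.Walk x y} (hp : p.IsMonophonic)
    (hqp : q.IsSubwalk p) : q.IsMonophonic := by
  obtain ⟨r₁, r₂, rfl⟩ := hqp
  exact hp.of_append_left.of_append_right

theorem IsMonophonic.map {V' : Type*} {G' : SimpleGraph V'} (f : G ↪g G') {p : G.Walk u v}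
    (hp : p.IsMonophonic) : (p.map f.toHom).IsMonophonic := by
  refine isMonophonic_iff.mpr ⟨hp.isPath.map f.injective,
    isChordless_iff_forall_mem_edges.mpr fun a b ha hb hab => ?_⟩
  rw [support_map, List.mem_map] at ha hb
  obtain ⟨a, ha, rfl⟩ := ha
  obtain ⟨b, hb, rfl⟩ := hb
  rw [edges_map]
  exact List.mem_map_of_mem (f := Sym2.map f) (hp.mem_edges ha hb (f.map_adj_iff.mp hab))

theorem IsMonophonic.not_adj_of_mem_support {p : G.Walk x z} (hp : p.IsMonophonic)
    (hy : y ∈ p.support) (hyx : y ≠ x) (hyz : y ≠ z) : ¬G.Adj x z := by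
  intro hxz
  obtain ⟨q, r, rfl⟩ := mem_support_iff_exists_append.mp hy
  have he := hp.mem_edges (start_mem_support _) (end_mem_support _) hxz
  rw [edges_append, List.mem_append] at he
  rcases he with he | he
  · exact hyz (hp.isPath.eq_of_mem_support_append (q.snd_mem_support_of_mem_edges he)
      r.end_mem_support).symm
  · exact hyx (hp.isPath.eq_of_mem_support_append q.start_mem_support
      (r.fst_mem_support_of_mem_edges he)).symm

theorem exists_isSubwalk_of_mem_support (p : G.Walk u v) (hx : x ∈ p.support)
    (hy : y ∈ p.support) :
    (∃ q : G.Walk x y, q.IsSubwalk p) ∨ ∃ q : G.Walk y x, q.IsSubwalk p := by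
  obtain ⟨q, r, rfl⟩ := mem_support_iff_exists_append.mp hx
  rcases (mem_support_append_iff q r).mp hy with hy | hy
  · obtain ⟨q₁, q₂, rfl⟩ := mem_support_iff_exists_append.mp hy
    exact .inr ⟨q₂, (isSubwalk_of_append_right rfl).trans (isSubwalk_of_append_left rfl)⟩
  · obtain ⟨r₁, r₂, rfl⟩ := mem_support_iff_exists_append.mp hy
    exact .inl ⟨r₁, (isSubwalk_of_append_left rfl).trans (isSubwalk_of_append_right rfl)⟩

theorem mem_edges_of_length_eq_one {p : G.Walk u v} (h : p.length = 1) : s(u, v) ∈ p.edges := by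
  cases p with
  | nil => simp at h
  | cons _ p =>
    cases p with
    | nil => simp
    | cons _ _ => simp at h

theorem _root_.SimpleGraph.Reachable.exists_isMonophonic (h : G.Reachable u v) :
    ∃ p : G.Walk u v, p.IsMonophonic := by
  obtain ⟨p, hp⟩ := h.exists_walk_length_eq_dist
  refine ⟨p, isMonophonic_iff.mpr ⟨p.isPath_of_length_eq_dist hp,
    isChordless_iff_forall_mem_edges.mpr fun a b ha hb hab => ?_⟩⟩
  rcases p.exists_isSubwalk_of_mem_support ha hb with ⟨q, hq⟩ | ⟨q, hq⟩
  · have hlen := (length_eq_dist_of_subwalk hp hq).trans (dist_eq_one_iff_adj.mpr hab)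
    exact hq.edges_subset (mem_edges_of_length_eq_one hlen)
  · have hlen := (length_eq_dist_of_subwalk hp hq).trans (dist_eq_one_iff_adj.mpr hab.symm)
    exact Sym2.eq_swap ▸ hq.edges_subset (mem_edges_of_length_eq_one hlen)

theorem exists_append_mem_support_of_mem_support (p : G.Walk u v) (hx : x ∈ p.support)
    (hy : y ∈ p.support) :
    (∃ (q : G.Walk u x) (r : G.Walk x v), p = q.append r ∧ y ∈ q.support) ∨
      ∃ (q : G.Walk u y) (r : G.Walk y v), p = q.append r ∧ x ∈ q.support := by
  obtain ⟨q, r, rfl⟩ := mem_support_iff_exists_append.mp hx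
  rcases (mem_support_append_iff q r).mp hy with hy | hy
  · exact .inl ⟨q, r, rfl, hy⟩
  · obtain ⟨r₁, r₂, rfl⟩ := mem_support_iff_exists_append.mp hy
    exact .inr ⟨q.append r₁, r₂, append_assoc _ _ _, by simp⟩

theorem exists_isSubwalk_mem_support_of_two_lt_ncard {s : Set V} (p : G.Walk u v)
    (hs : 2 < {a ∈ s | a ∈ p.support}.ncard) :
    ∃ x ∈ s, ∃ y ∈ s, ∃ z ∈ s, y ≠ x ∧ y ≠ z ∧ x ≠ z ∧
      ∃ q : G.Walk x z, q.IsSubwalk p ∧ y ∈ q.support := by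
  induction p with
  | nil =>
    refine absurd hs (not_lt.mpr ?_)
    calc _ ≤ ({_} : Set V).ncard := Set.ncard_le_ncard fun a ha => by simpa using ha.2
      _ ≤ 2 := by simp
  | @cons u u' v h p ih =>
    by_cases hp : 2 < {a ∈ s | a ∈ p.support}.ncard
    · obtain ⟨x, hx, y, hy, z, hz, hyx, hyz, hxz, q, hqp, hyq⟩ := ih hp
      exact ⟨x, hx, y, hy, z, hz, hyx, hyz, hxz, q, hqp.cons h, hyq⟩
    -- Otherwise `u` is a third vertex of `s`, before the two others `b`, `c` on `p`.
    have hu : u ∈ s ∧ u ∉ p.support := by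
      by_contra! hu
      have heq : {a ∈ s | a ∈ (cons h p).support} = {a ∈ s | a ∈ p.support} := by
        ext a
        simp only [support_cons, List.mem_cons, Set.mem_ofPred_eq]
        grind
      exact hp (heq ▸ hs)
    have hcard :
        {a ∈ s | a ∈ (cons h p).support}.ncard = {a ∈ s | a ∈ p.support}.ncard + 1 := by
      rw [← Set.ncard_insert_of_notMem (fun ha => hu.2 ha.2)
        ((List.finite_toSet _).subset fun _ h => h.2)]
      congr 1
      ext a
      simp only [support_cons, List.mem_cons, Set.mem_ofPred_eq, Set.mem_insert_iff]
      grind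
    obtain ⟨b, c, hbc, hbcs⟩ := (Set.ncard_eq_two (s := {a ∈ s | a ∈ p.support})).mp (by omega)
    have hb : b ∈ {a ∈ s | a ∈ p.support} := hbcs ▸ Set.mem_insert b {c}
    have hc : c ∈ {a ∈ s | a ∈ p.support} := hbcs ▸ Set.mem_insert_of_mem b rfl
    have hub : u ≠ b := by rintro rfl; exact hu.2 hb.2
    have huc : u ≠ c := by rintro rfl; exact hu.2 hc.2
    rcases p.exists_append_mem_support_of_mem_support hb.2 hc.2 with
      ⟨q, r, rfl, hcq⟩ | ⟨q, r, rfl, hbq⟩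
    · exact ⟨u, hu.1, c, hc.1, b, hb.1, huc.symm, hbc.symm, hub, cons h q,
        isSubwalk_of_append_left rfl, by simp [hcq]⟩
    · exact ⟨u, hu.1, b, hb.1, c, hc.1, hub.symm, hbc, huc, cons h q,
        isSubwalk_of_append_left rfl, by simp [hbq]⟩

end

section BoxProd

variable {α β : Type*} {G : SimpleGraph α} {H : SimpleGraph β} {a₀ a₁ a₂ : α} {b₁ b₂ : β}

theorem IsMonophonic.boxProdLeft {p : G.Walk a₁ a₂} (hp : p.IsMonophonic) (b : β) :
    (p.boxProdLeft H b).IsMonophonic :=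
  hp.map (G.boxProdLeft H b)

theorem IsMonophonic.boxProdRight {q : H.Walk b₁ b₂} (hq : q.IsMonophonic) (a : α) :
    (q.boxProdRight G a).IsMonophonic :=
  hq.map (G.boxProdRight H a)

theorem mem_support_boxProdLeft {p : G.Walk a₁ a₂} {b : β} {x : α × β} :
    x ∈ (p.boxProdLeft H b).support ↔ x.1 ∈ p.support ∧ x.2 = b := by
  change x ∈ (p.map (G.boxProdLeft H b).toHom).support ↔ _
  rw [support_map, List.mem_map]
  constructor
  · rintro ⟨a, ha, rfl⟩
    exact ⟨ha, rfl⟩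
  · rintro ⟨ha, hb⟩
    exact ⟨x.1, ha, by simp [← hb]⟩

theorem mem_support_boxProdRight {q : H.Walk b₁ b₂} {a : α} {x : α × β} :
    x ∈ (q.boxProdRight G a).support ↔ x.1 = a ∧ x.2 ∈ q.support := by
  change x ∈ (q.map (G.boxProdRight H a).toHom).support ↔ _
  rw [support_map, List.mem_map]
  constructor
  · rintro ⟨b, hb, rfl⟩
    exact ⟨rfl, hb⟩
  · rintro ⟨ha, hb⟩
    exact ⟨x.2, hb, by simp [← ha]⟩

theorem IsMonophonic.boxProdRight_append_boxProdLeft {q : H.Walk b₁ b₂} {p : G.Walk a₁ a₂}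
    (hq : q.IsMonophonic) (hp : p.IsMonophonic) :
    ((q.boxProdRight G a₁).append (p.boxProdLeft H b₂)).IsMonophonic := by
  refine (hq.boxProdRight a₁).append (hp.boxProdLeft b₂) ?_ ?_
  · rintro ⟨a, b⟩ hx hy
    rw [mem_support_boxProdRight] at hx
    rw [mem_support_boxProdLeft] at hy
    simp_all
  · rintro ⟨a, b⟩ hx ⟨a', b'⟩ hy hadj
    rw [mem_support_boxProdRight] at hx
    rw [mem_support_boxProdLeft] at hy
    rw [boxProd_adj] at hadj
    grind

theorem IsMonophonic.boxProdLeft_append_boxProdRight_append_boxProdLeft {p₁ : G.Walk a₀ a₁}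
    {q : H.Walk b₁ b₂} {p₂ : G.Walk a₁ a₂} (hp₁ : p₁.IsMonophonic) (hq : q.IsMonophonic)
    (hp₂ : p₂.IsMonophonic) (hne : b₁ ≠ b₂) (hnadj : ¬H.Adj b₁ b₂) :
    ((p₁.boxProdLeft H b₁).append
      ((q.boxProdRight G a₁).append (p₂.boxProdLeft H b₂))).IsMonophonic := by
  refine (hp₁.boxProdLeft b₁).append (hq.boxProdRight_append_boxProdLeft hp₂) ?_ ?_
  · rintro ⟨a, b⟩ hx hy
    rw [mem_support_boxProdLeft] at hx
    rw [mem_support_append_iff, mem_support_boxProdRight, mem_support_boxProdLeft] at hy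
    simp_all
  · rintro ⟨a, b⟩ hx ⟨a', b'⟩ hy hadj
    rw [mem_support_boxProdLeft] at hx
    rw [mem_support_append_iff, mem_support_boxProdRight, mem_support_boxProdLeft] at hy
    rw [boxProd_adj] at hadj
    grind

end BoxProd

end SimpleGraph.Walk

theorem isMPSet_snd_image_of_isMPSet_boxProd_general {α β : Type*}
    (G : SimpleGraph α) (H : SimpleGraph β) (hG : G.Connected)
    (S : Set (α × β)) (hS : (G □ H).IsMPSet S) :
    H.IsMPSet (Prod.snd '' S) := by
  intro u v p hp
  by_contra! hcard
  obtain ⟨x, ⟨⟨gx, x⟩, hxS, rfl⟩, y, ⟨⟨gy, y⟩, hyS, rfl⟩, z, ⟨⟨gz, z⟩, hzS, rfl⟩, hyx, hyz, hxz,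
    q, hqp, hyq⟩ := p.exists_isSubwalk_mem_support_of_two_lt_ncard hcard
  have hq := hp.of_isSubwalk hqp
  obtain ⟨p₁, hp₁⟩ := (hG.preconnected gx gy).exists_isMonophonic
  obtain ⟨p₂, hp₂⟩ := (hG.preconnected gy gz).exists_isMonophonic
  set W := (p₁.boxProdLeft H x).append ((q.boxProdRight G gy).append (p₂.boxProdLeft H z))
  have hW : W.IsMonophonic := hp₁.boxProdLeft_append_boxProdRight_append_boxProdLeft hq hp₂ hxz
    (hq.not_adj_of_mem_support hyq hyx hyz)
  have hyW : (gy, y) ∈ W.support := by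
    simp [W, Walk.mem_support_append_iff, Walk.mem_support_boxProdRight, hyq]
  refine (hS W hW).not_gt ((Set.two_lt_ncard_iff
    ((List.finite_toSet W.support).subset fun _ h => h.2)).mpr ?_)
  exact ⟨(gx, x), (gy, y), (gz, z), ⟨hxS, W.start_mem_support⟩, ⟨hyS, hyW⟩,
    ⟨hzS, W.end_mem_support⟩, by simp [hyx.symm], by simp [hxz], by simp [hyz]⟩

/-- If `S` is a monophonic position set of `G □ H`, then the projection
`π_H(S)` is a monophonic position set of `H`. -/
theorem isMPSet_snd_image_of_isMPSet_boxProd {α β : Type*} [Fintype α] [Fintype β]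
    (G : SimpleGraph α) (H : SimpleGraph β) (hG : G.Connected) (hH : H.Connected)
    (S : Set (α × β)) (hS : (G □ H).IsMPSet S) :
    H.IsMPSet (Prod.snd '' S) :=
  isMPSet_snd_image_of_isMPSet_boxProd_general G H hG S hS
end

section
/- Let G and H be finite connected graphs and let S be a monophonic position set of the Cartesian product G □ H with |S| > max{ω(G), ω(H)} such that π_G(S) induces a clique in G (this covers both the layered case, where |π_G(S)| = 1, and the cliquey case). Then every vertex of π_G(S) is a simplicial vertex of G. -/
/-!
Three points of `S` never lie on a common induced path of `G □ H`, and such paths are easy to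
build as staircases: segments running along induced paths of `H` inside single `H`-layers, with
consecutive layers adjacent in `G` and joined at a common height. Since `|π_G(S)| ≤ ω(G) < |S|`,
some `H`-layer contains two points of `S`. If all of `S` lies in the layer over `u`, then
`|S| > ω(H)` forces two non-adjacent heights, and two non-adjacent neighbours `x`, `y` of `u`
let a staircase leave the layer of `u` and come back, through three points of `S`. Otherwise a
point of `S` lies in an adjacent layer, and a case analysis of the three heights along induced
paths of `H` yields such a staircase, with detours through the layers over `x` and `y` only in
the last case.
-/

open SimpleGraph

namespace List

variable {V : Type*} {a b : V}

theorem pair_infix_append : ∀ {l₁ l₂ : List V}, [a, b] <:+: l₁ ++ l₂ →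
    [a, b] <:+: l₁ ∨ [a, b] <:+: l₂ ∨ (l₁.getLast? = some a ∧ l₂.head? = some b)
  | [], _, h => Or.inr (Or.inl (by simpa using h))
  | x :: t, l₂, h => by
    rcases infix_cons_iff.mp h with ⟨s, hs⟩ | h
    · rcases t with _ | ⟨y, t⟩
      · simp only [cons_append, nil_append, cons.injEq] at hs
        obtain ⟨rfl, rfl, rfl⟩ := hs
        simp
      · simp only [cons_append, cons.injEq, nil_append] at hs
        obtain ⟨rfl, rfl, -⟩ := hs
        exact Or.inl (infix_append [] [a, b] _)
    · rcases pair_infix_append h with h | h | ⟨hlast, hhead⟩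
      · exact Or.inl (infix_cons h)
      · exact Or.inr (Or.inl h)
      · rcases t with _ | ⟨y, t⟩
        · simp at hlast
        · exact Or.inr (Or.inr ⟨by rwa [getLast?_cons_cons], hhead⟩)

end List

namespace SimpleGraph

section InducedPath

variable {V W : Type*} {K : SimpleGraph V}

/-- `l` lists the vertices of an induced path of `K` in order. -/
structure IsInducedPath (K : SimpleGraph V) (l : List V) : Prop where
  isChain : l.IsChain K.Adj
  nodup : l.Nodup
  infix_of_adj ⦃a b : V⦄ : a ∈ l → b ∈ l → K.Adj a b → [a, b] <:+: l ∨ [b, a] <:+: l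

namespace IsInducedPath

variable {l l₁ l₂ : List V}

theorem singleton (a : V) : K.IsInducedPath [a] :=
  ⟨.singleton a, List.nodup_singleton a, by simp⟩

theorem append (h₁ : K.IsInducedPath l₁) (h₂ : K.IsInducedPath l₂)
    (hjoin : ∀ a ∈ l₁.getLast?, ∀ b ∈ l₂.head?, K.Adj a b)
    (hcross : ∀ a ∈ l₁, ∀ b ∈ l₂,
      a ≠ b ∧ (K.Adj a b → l₁.getLast? = some a ∧ l₂.head? = some b)) :
    K.IsInducedPath (l₁ ++ l₂) := by
  have hjoined {a b : V} (ha : l₁.getLast? = some a) (hb : l₂.head? = some b) :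
      [a, b] <:+: l₁ ++ l₂ := by
    obtain ⟨s, rfl⟩ := List.getLast?_eq_some_iff.mp ha
    obtain ⟨t, rfl⟩ := List.head?_eq_some_iff.mp hb
    simpa using List.infix_append s [a, b] t
  refine ⟨List.isChain_append.mpr ⟨h₁.isChain, h₂.isChain, hjoin⟩,
    List.nodup_append.mpr ⟨h₁.nodup, h₂.nodup, fun a ha b hb => (hcross a ha b hb).1⟩, ?_⟩
  intro a b ha hb hab
  rcases List.mem_append.mp ha with ha | ha <;> rcases List.mem_append.mp hb with hb | hb
  · exact (h₁.infix_of_adj ha hb hab).imp List.infix_append_of_infix_left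
      List.infix_append_of_infix_left
  · obtain ⟨ha', hb'⟩ := (hcross a ha b hb).2 hab
    exact Or.inl (hjoined ha' hb')
  · obtain ⟨hb', ha'⟩ := (hcross b hb a ha).2 hab.symm
    exact Or.inr (hjoined hb' ha')
  · exact (h₂.infix_of_adj ha hb hab).imp List.infix_append_of_infix_right
      List.infix_append_of_infix_right

theorem pair {a b : V} (h : K.Adj a b) : K.IsInducedPath [a, b] :=
  (singleton a).append (singleton b) (by simpa using h) (by simp [h.ne])

theorem of_append_left (h : K.IsInducedPath (l₁ ++ l₂)) : K.IsInducedPath l₁ := by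
  have hdisj := List.disjoint_of_nodup_append h.nodup
  refine ⟨(List.isChain_append.mp h.isChain).1, h.nodup.of_append_left, ?_⟩
  intro a b ha hb hab
  have hl₁ {x y : V} (hy : y ∈ l₁) (hxy : [x, y] <:+: l₁ ++ l₂) : [x, y] <:+: l₁ := by
    rcases List.pair_infix_append hxy with h | h | ⟨-, h⟩
    · exact h
    · exact absurd (h.subset (by simp)) (hdisj hy)
    · exact absurd (List.mem_of_mem_head? h) (hdisj hy)
  exact (h.infix_of_adj (List.mem_append_left _ ha) (List.mem_append_left _ hb) hab).imp
    (hl₁ hb) (hl₁ ha)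

theorem reverse (h : K.IsInducedPath l) : K.IsInducedPath l.reverse := by
  refine ⟨List.isChain_reverse.mpr (h.isChain.imp fun _ _ hab => hab.symm),
    List.nodup_reverse.mpr h.nodup, fun a b ha hb hab => ?_⟩
  rw [List.mem_reverse] at ha hb
  simpa [← List.reverse_infix (l₁ := [a, b]), or_comm] using h.infix_of_adj ha hb hab

theorem of_append_right (h : K.IsInducedPath (l₁ ++ l₂)) : K.IsInducedPath l₂ := by
  simpa using (show K.IsInducedPath (l₂.reverse ++ l₁.reverse) by
    simpa using h.reverse).of_append_left.reverse

theorem not_adj_of_mem_left_of_mem_right {x a b : V} (h : K.IsInducedPath (l₁ ++ x :: l₂))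
    (ha : a ∈ l₁) (hb : b ∈ l₂) : ¬K.Adj a b := by
  intro hab
  have hdisj := List.disjoint_of_nodup_append h.nodup
  have hx : x ∉ l₂ := (List.nodup_cons.mp h.nodup.of_append_right).1
  rcases h.infix_of_adj (by simp [ha]) (by simp [hb]) hab with hab | hba
  · rcases List.pair_infix_append hab with h' | h' | ⟨-, h'⟩
    · exact hdisj (h'.subset (by simp : b ∈ [a, b])) (by simp [hb])
    · exact hdisj ha (h'.subset (by simp : a ∈ [a, b]))
    · exact hx (by simp_all)
  · rcases List.pair_infix_append hba with h' | h' | ⟨h', -⟩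
    · exact hdisj (h'.subset (by simp : b ∈ [b, a])) (by simp [hb])
    · exact hdisj ha (h'.subset (by simp : a ∈ [b, a]))
    · exact hdisj (List.mem_of_mem_getLast? h') (by simp [hb])

theorem map {K' : SimpleGraph W} (f : K ↪g K') (h : K.IsInducedPath l) :
    K'.IsInducedPath (l.map f) := by
  refine ⟨List.isChain_map_of_isChain f (fun _ _ => f.map_adj_iff.mpr) h.isChain,
    h.nodup.map f.injective, ?_⟩
  intro a' b' ha' hb' hab
  obtain ⟨a, ha, rfl⟩ := List.mem_map.mp ha'
  obtain ⟨b, hb, rfl⟩ := List.mem_map.mp hb'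
  exact (h.infix_of_adj ha hb (f.map_adj_iff.mp hab)).imp (·.map f) (·.map f)

end IsInducedPath

structure IsInducedPathFromTo (K : SimpleGraph V) (a b : V) (l : List V) : Prop
    extends K.IsInducedPath l where
  head?_eq : l.head? = some a
  getLast?_eq : l.getLast? = some b

namespace IsInducedPathFromTo

variable {a b : V} {l : List V}

theorem start_mem (h : K.IsInducedPathFromTo a b l) : a ∈ l := List.mem_of_mem_head? h.head?_eq

theorem end_mem (h : K.IsInducedPathFromTo a b l) : b ∈ l := List.mem_of_mem_getLast? h.getLast?_eq

theorem reverse (h : K.IsInducedPathFromTo a b l) : K.IsInducedPathFromTo b a l.reverse :=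
  ⟨h.toIsInducedPath.reverse, by simpa using h.getLast?_eq, by simpa using h.head?_eq⟩

theorem split {L M : List V} {c : V} (h : K.IsInducedPathFromTo a b (L ++ c :: M)) :
    K.IsInducedPathFromTo a c (L ++ [c]) ∧ K.IsInducedPathFromTo c b (c :: M) :=
  ⟨⟨(show K.IsInducedPath ((L ++ [c]) ++ M) by simpa using h.toIsInducedPath).of_append_left,
      by simpa [List.head?_append] using h.head?_eq, by simp⟩,
    ⟨h.of_append_right, rfl, by simpa [List.getLast?_append] using h.getLast?_eq⟩⟩

end IsInducedPathFromTo

theorem Walk.isMonophonic_iff_s12 {u v : V} (p : K.Walk u v) :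
    p.IsMonophonic ↔ K.IsInducedPath p.support := by
  simp only [Walk.IsMonophonic, Walk.isPath_def, Walk.adj_toSubgraph_iff_mem_edges,
    ← Walk.infix_support_iff_mem_edges]
  exact ⟨fun ⟨hnd, hind⟩ => ⟨p.isChain_adj_support, hnd, hind⟩,
    fun h => ⟨h.nodup, h.infix_of_adj⟩⟩

theorem Walk.isMonophonic_of_length_eq_dist {u v : V} (p : K.Walk u v)
    (hp : p.length = K.dist u v) : p.IsMonophonic := by
  classical
  refine ⟨p.isPath_of_length_eq_dist hp, fun a b ha hb hab => ?_⟩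
  -- along a geodesic the position of a vertex is its distance from `u`
  have hpos {x : V} (hx : x ∈ p.support) : K.dist u x = (p.takeUntil x hx).length := by
    have h₁ := dist_le (p.takeUntil x hx)
    have h₂ := dist_le (p.dropUntil x hx)
    have h₃ := (p.takeUntil x hx).reachable.dist_triangle_left v
    have h₄ : (p.takeUntil x hx).length + (p.dropUntil x hx).length = p.length := by
      rw [← Walk.length_append, p.take_spec]
    omega
  have hstep {x y : V} (hx : x ∈ p.support) (hy : y ∈ p.support) (hxy : K.Adj x y) :
      (p.takeUntil y hy).length ≤ (p.takeUntil x hx).length + 1 := by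
    rw [← hpos hx, ← hpos hy, ← dist_eq_one_iff_adj.mpr hxy]
    exact (p.takeUntil x hx).reachable.dist_triangle_left y
  have hne : (p.takeUntil a ha).length ≠ (p.takeUntil b hb).length := fun h =>
    hab.ne (by rw [← p.getVert_length_takeUntil ha, h, p.getVert_length_takeUntil hb])
  rw [Walk.toSubgraph_adj_iff]
  rcases Nat.lt_or_gt_of_ne hne with hlt | hlt
  · refine ⟨(p.takeUntil a ha).length, ?_, ?_⟩
    · rw [show (p.takeUntil a ha).length + 1 = (p.takeUntil b hb).length by
        have := hstep ha hb hab; omega, p.getVert_length_takeUntil, p.getVert_length_takeUntil]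
    · have := p.length_takeUntil_le_length hb; omega
  · refine ⟨(p.takeUntil b hb).length, ?_, ?_⟩
    · rw [show (p.takeUntil b hb).length + 1 = (p.takeUntil a ha).length by
        have := hstep hb ha hab.symm; omega, p.getVert_length_takeUntil,
        p.getVert_length_takeUntil, Sym2.eq_swap]
    · have := p.length_takeUntil_le_length ha; omega

theorem Connected.exists_isInducedPathFromTo (hK : K.Connected) (a b : V) :
    ∃ l, K.IsInducedPathFromTo a b l := by
  obtain ⟨p, hp⟩ := hK.exists_walk_length_eq_dist a b
  refine ⟨p.support, (p.isMonophonic_iff_s12).mp (p.isMonophonic_of_length_eq_dist hp), ?_, ?_⟩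
  · rw [← p.cons_tail_support]; rfl
  · rw [List.getLast?_eq_some_getLast p.support_ne_nil, p.getLast_support]

theorem IsMPSet.not_isInducedPath {S : Set V} (hS : K.IsMPSet S) {l : List V} {a b c : V}
    (haS : a ∈ S) (hbS : b ∈ S) (hcS : c ∈ S) (hab : a ≠ b) (hac : a ≠ c) (hbc : b ≠ c)
    (ha : a ∈ l) (hb : b ∈ l) (hc : c ∈ l) : ¬K.IsInducedPath l := by
  intro hl
  have hne : l ≠ [] := List.ne_nil_of_mem ha
  let p := Walk.ofSupport l hne hl.isChain
  have hsupp : p.support = l := Walk.support_ofSupport hne hl.isChain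
  have hp := hS p ((p.isMonophonic_iff_s12).mpr (by rwa [hsupp]))
  have hsub : ({a, b, c} : Set V) ⊆ {x ∈ S | x ∈ p.support} := by
    rw [hsupp]
    rintro x (rfl | rfl | rfl) <;> simp_all
  have h3 := Set.ncard_le_ncard hsub ((p.support.finite_toSet).subset fun x hx => hx.2)
  rw [Set.ncard_insert_of_notMem (by simp [hab, hac]), Set.ncard_pair hbc] at h3
  omega

def Separated (K : SimpleGraph V) (A B : List V) : Prop :=
  ∀ a ∈ A, ∀ b ∈ B, a ≠ b ∧ ¬K.Adj a b

theorem separated_singleton {a b : V} (hne : a ≠ b) (hadj : ¬K.Adj a b) :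
    K.Separated [a] [b] := by
  simp [Separated, hne, hadj]

end InducedPath

section BoxProd

variable {α β : Type*} {G : SimpleGraph α} {H : SimpleGraph β} {S : Set (α × β)}

def layerList (s : α × List β) : List (α × β) := s.2.map (Prod.mk s.1)

/-- A staircase in `G □ H`: each segment `(c, L)` follows the induced path `L` of `H` inside the
layer over `c`, and consecutive segments are joined by a `G`-edge at their one common height. -/
def IsStair (G : SimpleGraph α) (H : SimpleGraph β) : List (α × List β) → Prop
  | [] => True
  | [s] => H.IsInducedPath s.2
  | s :: t :: r => H.IsInducedPath s.2 ∧ G.Adj s.1 t.1 ∧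
      (∃ z, s.2.getLast? = some z ∧ t.2.head? = some z ∧ ∀ w ∈ s.2, w ∈ t.2 → w = z) ∧
      r.Forall (fun u => (G □ H).Separated (layerList s) (layerList u)) ∧ IsStair G H (t :: r)

def stairPath (ss : List (α × List β)) : List (α × β) := ss.flatMap layerList

@[simp]
theorem mem_stairPath {ss : List (α × List β)} {x : α × β} :
    x ∈ stairPath ss ↔ ∃ s ∈ ss, s.1 = x.1 ∧ x.2 ∈ s.2 := by
  simp only [stairPath, layerList, List.mem_flatMap, List.mem_map]
  exact ⟨fun ⟨s, hs, w, hw, hx⟩ => ⟨s, hs, by simp [← hx], by simp [← hx, hw]⟩,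
    fun ⟨s, hs, h₁, h₂⟩ => ⟨s, hs, x.2, h₂, by simp [h₁]⟩⟩

theorem separated_layerList_of_not_adj {c d : α} (hne : c ≠ d) (hadj : ¬G.Adj c d)
    (L M : List β) : (G □ H).Separated (layerList (c, L)) (layerList (d, M)) := by
  simp_all [Separated, layerList]

theorem separated_layerList_of_disjoint {c d : α} (hne : c ≠ d) {L M : List β}
    (h : L.Disjoint M) : (G □ H).Separated (layerList (c, L)) (layerList (d, M)) := by
  simp only [Separated, layerList, List.mem_map, boxProd_adj]
  rintro _ ⟨v, hv, rfl⟩ _ ⟨w, hw, rfl⟩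
  exact ⟨by simp [hne], by rintro (⟨-, rfl⟩ | ⟨-, rfl⟩) <;> simp_all [h hv]⟩

theorem separated_layerList_self {c : α} {L M : List β} (h : H.Separated L M) :
    (G □ H).Separated (layerList (c, L)) (layerList (c, M)) := by
  simp only [Separated, layerList, List.mem_map, boxProd_adj]
  rintro _ ⟨v, hv, rfl⟩ _ ⟨w, hw, rfl⟩
  obtain ⟨hne, hadj⟩ := h v hv w hw
  exact ⟨by simp [hne], by simp [hadj]⟩

theorem IsInducedPath.layerList {L : List β} (h : H.IsInducedPath L) (c : α) :
    (G □ H).IsInducedPath (layerList (c, L)) :=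
  h.map (G.boxProdRight H c)

theorem IsStair.isInducedPath : ∀ {ss : List (α × List β)}, IsStair G H ss →
    (G □ H).IsInducedPath (stairPath ss)
  | [], _ => ⟨.nil, List.nodup_nil, by simp [stairPath]⟩
  | [s], h => by simpa [stairPath] using h.layerList (G := G) s.1
  | s :: t :: r, ⟨hs, hadj, ⟨z, hlast, hhead, hmeet⟩, hsep, hrest⟩ => by
    have hA : (G □ H).IsInducedPath (layerList s) := hs.layerList s.1
    have hlastA : (layerList s).getLast? = some (s.1, z) := by
      simp [layerList, List.getLast?_map, hlast]
    have hheadB : (stairPath (t :: r)).head? = some (t.1, z) := by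
      obtain ⟨M, hM⟩ := List.head?_eq_some_iff.mp hhead
      simp [stairPath, layerList, hM]
    refine (hA.append hrest.isInducedPath ?_ ?_ : (G □ H).IsInducedPath (layerList s ++ _))
    · simp [hlastA, hheadB, hadj]
    · intro a ha b hb
      obtain ⟨v, hv, rfl⟩ := List.mem_map.mp ha
      obtain ⟨u, hu, hbu⟩ := List.mem_flatMap.mp hb
      rcases List.mem_cons.mp hu with rfl | hu
      · obtain ⟨w, hw, rfl⟩ := List.mem_map.mp hbu
        refine ⟨by simp [hadj.ne], fun hvw => ?_⟩
        obtain ⟨-, rfl⟩ : G.Adj s.1 u.1 ∧ v = w := by simpa [hadj.ne] using hvw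
        obtain rfl := hmeet v hv hw
        exact ⟨hlastA, hheadB⟩
      · have := List.forall_iff_forall_mem.mp hsep u hu _ ha b hbu
        exact ⟨this.1, fun h => (this.2 h).elim⟩

theorem IsMPSet.not_isStair (hS : (G □ H).IsMPSet S)
    {ss : List (α × List β)} {a b c : α × β} (haS : a ∈ S) (hbS : b ∈ S) (hcS : c ∈ S)
    (hab : a ≠ b) (hac : a ≠ c) (hbc : b ≠ c)
    (ha : a ∈ stairPath ss) (hb : b ∈ stairPath ss) (hc : c ∈ stairPath ss) :
    ¬IsStair G H ss :=
  fun h => hS.not_isInducedPath haS hbS hcS hab hac hbc ha hb hc h.isInducedPath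

section OneLayer

theorem IsMPSet.false_of_isInducedPath_layer (hS : (G □ H).IsMPSet S) {u : α} {L : List β}
    {t₁ t₂ t₃ : β} (hL : H.IsInducedPath L) (ht₁ : t₁ ∈ L) (ht₂ : t₂ ∈ L) (ht₃ : t₃ ∈ L)
    (hne₁₂ : t₁ ≠ t₂) (hne₁₃ : t₁ ≠ t₃) (hne₂₃ : t₂ ≠ t₃)
    (ha : (u, t₁) ∈ S) (hb : (u, t₂) ∈ S) (hc : (u, t₃) ∈ S) : False :=
  hS.not_isStair (ss := [(u, L)]) ha hb hc (by simpa using hne₁₂) (by simpa using hne₁₃)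
    (by simpa using hne₂₃) (by simp [ht₁]) (by simp [ht₂]) (by simp [ht₃]) hL

theorem IsMPSet.false_of_edge_detour (hS : (G □ H).IsMPSet S) {u x : α} {Q : List β}
    {t₁ t₂ t₃ : β} (hux : G.Adj u x) (h₂₃ : H.Adj t₂ t₃) (hQ : H.IsInducedPathFromTo t₃ t₁ Q)
    (h₂Q : t₂ ∉ Q) (hne₁₂ : t₁ ≠ t₂) (hne₁₃ : t₁ ≠ t₃) (h₁₂ : ¬H.Adj t₁ t₂)
    (h₁₃ : ¬H.Adj t₁ t₃)
    (ha : (u, t₁) ∈ S) (hb : (u, t₂) ∈ S) (hc : (u, t₃) ∈ S) : False := by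
  refine hS.not_isStair (ss := [(u, [t₂, t₃]), (x, Q), (u, [t₁])]) ha hb hc
    (by simpa using hne₁₂) (by simpa using hne₁₃) (by simpa using h₂₃.ne) (by simp) (by simp)
    (by simp)
    ⟨.pair h₂₃, hux, ⟨t₃, rfl, hQ.head?_eq, by simp [h₂Q]⟩,
      separated_layerList_self ?_,
      hQ.toIsInducedPath, hux.symm, ⟨t₁, hQ.getLast?_eq, rfl, by simp⟩, trivial, .singleton t₁⟩
  simp only [Separated, List.mem_cons, List.not_mem_nil, or_false, forall_eq_or_imp,
      forall_eq]
  exact ⟨⟨hne₁₂.symm, fun h => h₁₂ h.symm⟩, hne₁₃.symm, fun h => h₁₃ h.symm⟩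

theorem IsMPSet.false_of_two_detours_layer (hS : (G □ H).IsMPSet S) {u x y : α}
    {L₁ L₂ : List β} {p m q : β} (hux : G.Adj u x) (huy : G.Adj u y) (hxy : ¬G.Adj x y)
    (hxy' : x ≠ y) (hL₁ : H.IsInducedPathFromTo p m L₁) (hL₂ : H.IsInducedPathFromTo m q L₂)
    (hpm : H.Separated [p] [m]) (hpq : H.Separated [p] [q]) (hmq : H.Separated [m] [q])
    (hpL₂ : p ∉ L₂) (hqL₁ : q ∉ L₁)
    (hp : (u, p) ∈ S) (hm : (u, m) ∈ S) (hq : (u, q) ∈ S) : False :=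
  hS.not_isStair (ss := [(u, [p]), (x, L₁), (u, [m]), (y, L₂), (u, [q])]) hp hm hq
    (by simpa using (hpm p (by simp) m (by simp)).1)
    (by simpa using (hpq p (by simp) q (by simp)).1)
    (by simpa using (hmq m (by simp) q (by simp)).1) (by simp) (by simp) (by simp)
    ⟨.singleton p, hux, ⟨p, rfl, hL₁.head?_eq, by simp⟩,
      ⟨separated_layerList_self hpm, separated_layerList_of_disjoint huy.ne (by simpa using hpL₂),
        separated_layerList_self hpq⟩,
      hL₁.toIsInducedPath, hux.symm, ⟨m, hL₁.getLast?_eq, rfl, by simp⟩,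
      ⟨separated_layerList_of_not_adj hxy' hxy _ _,
        separated_layerList_of_disjoint hux.ne.symm (by simpa [eq_comm] using hqL₁)⟩,
      .singleton m, huy, ⟨m, rfl, hL₂.head?_eq, by simp⟩, separated_layerList_self hmq,
      hL₂.toIsInducedPath, huy.symm, ⟨q, hL₂.getLast?_eq, rfl, by simp⟩, trivial, .singleton q⟩

theorem IsMPSet.adj_of_mem_layer (hS : (G □ H).IsMPSet S) (hH : H.Connected) {u x y : α}
    {t₁ t₂ t₃ : β} (hux : G.Adj u x) (huy : G.Adj u y) (hxy : ¬G.Adj x y) (hxy' : x ≠ y)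
    (hne₁₂ : t₁ ≠ t₂) (hne₁₃ : t₁ ≠ t₃) (hne₂₃ : t₂ ≠ t₃)
    (ha : (u, t₁) ∈ S) (hb : (u, t₂) ∈ S) (hc : (u, t₃) ∈ S) : H.Adj t₁ t₂ := by
  by_contra h₁₂
  have hthrough {L : List β} (hL : H.IsInducedPath L) (h₁ : t₁ ∈ L) (h₂ : t₂ ∈ L)
      (h₃ : t₃ ∈ L) : False :=
    hS.false_of_isInducedPath_layer hL h₁ h₂ h₃ hne₁₂ hne₁₃ hne₂₃ ha hb hc
  obtain ⟨Q, hQ⟩ := hH.exists_isInducedPathFromTo t₁ t₂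
  by_cases h₃Q : t₃ ∈ Q
  · exact hthrough hQ.toIsInducedPath hQ.start_mem hQ.end_mem h₃Q
  by_cases h₁₃ : H.Adj t₁ t₃ <;> by_cases h₂₃ : H.Adj t₂ t₃
  · refine hthrough ((IsInducedPath.pair h₁₃).append (.singleton t₂) (by simpa using h₂₃.symm)
      ?_) (by simp) (by simp) (by simp)
    simp [hne₁₂, h₁₂, h₂₃.ne']
  · obtain ⟨R, hR⟩ := hH.exists_isInducedPathFromTo t₃ t₂
    by_cases h₁R : t₁ ∈ R
    · exact hthrough hR.toIsInducedPath h₁R hR.end_mem hR.start_mem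
    exact hS.false_of_edge_detour hux h₁₃ hR h₁R hne₁₂.symm hne₂₃ (fun h => h₁₂ h.symm)
      h₂₃ hb ha hc
  · obtain ⟨R, hR⟩ := hH.exists_isInducedPathFromTo t₃ t₁
    by_cases h₂R : t₂ ∈ R
    · exact hthrough hR.toIsInducedPath hR.end_mem h₂R hR.start_mem
    exact hS.false_of_edge_detour hux h₂₃ hR h₂R hne₁₂ hne₁₃ h₁₂ h₁₃ ha hb hc
  · obtain ⟨R, hR⟩ := hH.exists_isInducedPathFromTo t₂ t₃
    by_cases h₁R : t₁ ∈ R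
    · exact hthrough hR.toIsInducedPath h₁R hR.start_mem hR.end_mem
    exact hS.false_of_two_detours_layer hux huy hxy hxy' hQ hR (separated_singleton hne₁₂ h₁₂)
      (separated_singleton hne₁₃ h₁₃) (separated_singleton hne₂₃ h₂₃) h₁R h₃Q ha hb hc

end OneLayer

section TwoLayers

theorem IsMPSet.false_of_corner (hS : (G □ H).IsMPSet S) {g g' : α} {L M : List β}
    {z h₁ h₂ h₃ : β} (hgg' : G.Adj g g') (hL : H.IsInducedPath L) (hz : L.getLast? = some z)
    (hM : H.IsInducedPath (z :: M)) (hLM : L.Disjoint M) (hm₁ : h₁ ∈ L) (hm₂ : h₂ ∈ L)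
    (hm₃ : h₃ ∈ z :: M) (hne : h₁ ≠ h₂)
    (ha : (g, h₁) ∈ S) (hb : (g, h₂) ∈ S) (hc : (g', h₃) ∈ S) : False :=
  hS.not_isStair (ss := [(g, L), (g', z :: M)]) ha hb hc (by simpa using hne)
    (by simp [hgg'.ne]) (by simp [hgg'.ne]) (by simp [hm₁]) (by simp [hm₂]) (by simp [hm₃])
    ⟨hL, hgg', ⟨z, hz, rfl, fun w hw hwM => (List.mem_cons.mp hwM).resolve_right (hLM hw)⟩,
      trivial, hM⟩

theorem IsMPSet.false_of_hop (hS : (G □ H).IsMPSet S) {g g' : α} {P R : List β}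
    {p h₁ h₂ h₃ : β} (hgg' : G.Adj g g') (hQ : H.IsInducedPathFromTo h₁ h₂ (P ++ p :: h₃ :: R))
    (hne : h₃ ≠ h₂) (ha : (g, h₁) ∈ S) (hb : (g, h₂) ∈ S) (hc : (g', h₃) ∈ S) : False := by
  have hQ' : H.IsInducedPath ((P ++ [p]) ++ h₃ :: R) := by simpa using hQ.toIsInducedPath
  have hdisj := List.disjoint_of_nodup_append hQ'.nodup
  have hm₁ : h₁ ∈ P ++ [p] := List.mem_of_mem_head? (by simpa using hQ.head?_eq)
  have hlast : (h₃ :: R).getLast? = some h₂ := by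
    simpa [List.getLast?_append, List.getLast?_cons_cons] using hQ.getLast?_eq
  have hm₂ : h₂ ∈ R := by
    rcases R with _ | ⟨r, R⟩
    · exact absurd (by simpa using hlast) hne
    · exact List.mem_of_mem_getLast? (by rwa [List.getLast?_cons_cons] at hlast)
  refine hS.not_isStair (ss := [(g, P ++ [p]), (g', p :: h₃ :: R), (g, [h₂])]) ha hb hc
    (by simpa using fun h => hdisj (h ▸ hm₁) (by simp [hm₂])) (by simp [hgg'.ne])
    (by simp [hgg'.ne]) (by simp [hm₁]) (by simp) (by simp)
    ⟨hQ'.of_append_left, hgg', ⟨p, by simp, rfl, fun w hw hw' => ?_⟩,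
      separated_layerList_self fun w hw v hv => ?_,
      hQ.of_append_right, hgg'.symm, ⟨h₂, by rwa [List.getLast?_cons_cons], rfl, by simp⟩,
      trivial, .singleton h₂⟩
  · rcases List.mem_cons.mp hw' with rfl | hw'
    · rfl
    · exact (hdisj hw hw').elim
  · rw [List.mem_singleton] at hv
    subst hv
    exact ⟨fun h => hdisj hw (by simp [h, hm₂]),
      hQ'.not_adj_of_mem_left_of_mem_right hw hm₂⟩

theorem IsMPSet.false_of_detour_corner (hS : (G □ H).IsMPSet S) {g g' w : α} {Q R : List β}
    {h₁ h₂ h₃ : β} (hwg : G.Adj w g) (hgg' : G.Adj g g') (hwg' : ¬G.Adj w g') (hwg'ne : w ≠ g')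
    (hQ : H.IsInducedPathFromTo h₁ h₂ Q) (hR : H.IsInducedPathFromTo h₂ h₃ R)
    (hne : h₁ ≠ h₂) (hadj : ¬H.Adj h₁ h₂) (h₁R : h₁ ∉ R)
    (ha : (g, h₁) ∈ S) (hb : (g, h₂) ∈ S) (hc : (g', h₃) ∈ S) : False :=
  hS.not_isStair (ss := [(g, [h₁]), (w, Q), (g, [h₂]), (g', R)]) ha hb hc (by simpa using hne)
    (by simp [hgg'.ne]) (by simp [hgg'.ne]) (by simp) (by simp) (by simp [hR.end_mem])
    ⟨.singleton h₁, hwg.symm, ⟨h₁, rfl, hQ.head?_eq, by simp⟩,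
      ⟨separated_layerList_self (separated_singleton hne hadj),
        separated_layerList_of_disjoint hgg'.ne (by simpa using h₁R)⟩,
      hQ.toIsInducedPath, hwg, ⟨h₂, hQ.getLast?_eq, rfl, by simp⟩,
      separated_layerList_of_not_adj hwg'ne hwg' _ _,
      .singleton h₂, hgg', ⟨h₂, rfl, hR.head?_eq, by simp⟩, trivial, hR.toIsInducedPath⟩

theorem IsMPSet.false_of_two_detours (hS : (G □ H).IsMPSet S) {g g' w₁ w₂ : α} {Q R : List β}
    {h₁ h₂ h₃ : β} (hw₁g : G.Adj w₁ g) (hw₂g : G.Adj w₂ g) (hw₂g' : G.Adj w₂ g')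
    (hgg' : G.Adj g g') (hw₁w₂ : ¬G.Adj w₁ w₂) (hw₁w₂' : w₁ ≠ w₂) (hw₁g' : w₁ ≠ g')
    (hQ : H.IsInducedPathFromTo h₁ h₂ Q) (hR : H.IsInducedPathFromTo h₂ h₃ R)
    (hne₁₂ : h₁ ≠ h₂) (hne₁₃ : h₁ ≠ h₃) (hne₂₃ : h₂ ≠ h₃) (hadj : ¬H.Adj h₁ h₂)
    (h₁R : h₁ ∉ R) (h₃Q : h₃ ∉ Q)
    (ha : (g, h₁) ∈ S) (hb : (g, h₂) ∈ S) (hc : (g', h₃) ∈ S) : False :=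
  hS.not_isStair (ss := [(g, [h₁]), (w₁, Q), (g, [h₂]), (w₂, R), (g', [h₃])]) ha hb hc
    (by simpa using hne₁₂) (by simp [hgg'.ne]) (by simp [hgg'.ne]) (by simp) (by simp) (by simp)
    ⟨.singleton h₁, hw₁g.symm, ⟨h₁, rfl, hQ.head?_eq, by simp⟩,
      ⟨separated_layerList_self (separated_singleton hne₁₂ hadj),
        separated_layerList_of_disjoint hw₂g.ne.symm (by simpa using h₁R),
        separated_layerList_of_disjoint hgg'.ne (by simpa [eq_comm] using hne₁₃)⟩,
      hQ.toIsInducedPath, hw₁g, ⟨h₂, hQ.getLast?_eq, rfl, by simp⟩,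
      ⟨separated_layerList_of_not_adj hw₁w₂' hw₁w₂ _ _,
        separated_layerList_of_disjoint hw₁g' (by simpa [eq_comm] using h₃Q)⟩,
      .singleton h₂, hw₂g.symm, ⟨h₂, rfl, hR.head?_eq, by simp⟩,
      separated_layerList_of_disjoint hgg'.ne (by simpa [eq_comm] using hne₂₃),
      hR.toIsInducedPath, hw₂g', ⟨h₃, hR.getLast?_eq, rfl, by simp⟩, trivial, .singleton h₃⟩

theorem IsMPSet.false_of_corner_detour (hS : (G □ H).IsMPSet S) {g g' w : α} {Q P : List β}
    {h₁ h₂ h₃ : β} (hgg' : G.Adj g g') (hwg' : G.Adj w g') (hwg : ¬G.Adj w g) (hwgne : w ≠ g)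
    (hQ : H.IsInducedPathFromTo h₂ h₁ Q) (hP : H.IsInducedPathFromTo h₁ h₃ P)
    (hne₁₂ : h₁ ≠ h₂) (hne₁₃ : h₁ ≠ h₃) (hadj : ¬H.Adj h₁ h₃) (h₃Q : h₃ ∉ Q)
    (ha : (g, h₁) ∈ S) (hb : (g, h₂) ∈ S) (hc : (g', h₃) ∈ S) : False :=
  hS.not_isStair (ss := [(g, Q), (g', [h₁]), (w, P), (g', [h₃])]) ha hb hc
    (by simpa using hne₁₂) (by simp [hgg'.ne]) (by simp [hgg'.ne])
    (by simp [hQ.end_mem]) (by simp [hQ.start_mem]) (by simp)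
    ⟨hQ.toIsInducedPath, hgg', ⟨h₁, hQ.getLast?_eq, rfl, by simp⟩,
      ⟨separated_layerList_of_not_adj hwgne.symm (fun h => hwg h.symm) _ _,
        separated_layerList_of_disjoint hgg'.ne (by simpa [eq_comm] using h₃Q)⟩,
      .singleton h₁, hwg'.symm, ⟨h₁, rfl, hP.head?_eq, by simp⟩,
      separated_layerList_self (separated_singleton hne₁₃ hadj),
      hP.toIsInducedPath, hwg', ⟨h₃, hP.getLast?_eq, rfl, by simp⟩, trivial, .singleton h₃⟩

theorem adj_and_adj_of_not_adj {x y v : α} (hxy : ¬G.Adj x y) (hxy' : x ≠ y)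
    (hx : G.Adj x v ∨ x = v) (hy : G.Adj y v ∨ y = v) : G.Adj x v ∧ G.Adj y v := by
  rcases hx with hx | rfl <;> rcases hy with hy | rfl
  · exact ⟨hx, hy⟩
  · exact absurd hx hxy
  · exact absurd hy.symm hxy
  · exact absurd rfl hxy'

theorem IsMPSet.false_of_two_layers_of_not_adj (hS : (G □ H).IsMPSet S) (hH : H.Connected)
    {g g' x y : α} {Q R : List β} {h₁ h₂ h₃ : β} (hgg' : G.Adj g g') (hxy : ¬G.Adj x y)
    (hxy' : x ≠ y) (hu : (G.Adj g x ∧ G.Adj g y) ∨ (G.Adj g' x ∧ G.Adj g' y))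
    (hQ : H.IsInducedPathFromTo h₁ h₂ Q) (hR : H.IsInducedPathFromTo h₂ h₃ R)
    (h₃Q : h₃ ∉ Q) (h₁R : h₁ ∉ R) (hne : h₁ ≠ h₂) (h₁₂ : ¬H.Adj h₁ h₂) (h₁₃ : ¬H.Adj h₁ h₃)
    (ha : (g, h₁) ∈ S) (hb : (g, h₂) ∈ S) (hc : (g', h₃) ∈ S) : False := by
  have hne₁₃ : h₁ ≠ h₃ := fun h => h₃Q (h ▸ hQ.start_mem)
  have hne₂₃ : h₂ ≠ h₃ := fun h => h₃Q (h ▸ hQ.end_mem)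
  rcases hu with ⟨hgx, hgy⟩ | ⟨hg'x, hg'y⟩
  · by_cases hx : ¬G.Adj x g' ∧ x ≠ g'
    · exact hS.false_of_detour_corner hgx.symm hgg' hx.1 hx.2 hQ hR hne h₁₂ h₁R ha hb hc
    by_cases hy : ¬G.Adj y g' ∧ y ≠ g'
    · exact hS.false_of_detour_corner hgy.symm hgg' hy.1 hy.2 hQ hR hne h₁₂ h₁R ha hb hc
    obtain ⟨hxg', hyg'⟩ := adj_and_adj_of_not_adj (v := g') hxy hxy' (by tauto) (by tauto)
    exact hS.false_of_two_detours hgx.symm hgy.symm hyg' hgg' hxy hxy' hxg'.ne hQ hR hne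
      hne₁₃ hne₂₃ h₁₂ h₁R h₃Q ha hb hc
  · obtain ⟨P, hP⟩ := hH.exists_isInducedPathFromTo h₁ h₃
    have h₃Q' : h₃ ∉ Q.reverse := by simpa using h₃Q
    by_cases hx : ¬G.Adj x g ∧ x ≠ g
    · exact hS.false_of_corner_detour hgg' hg'x.symm hx.1 hx.2 hQ.reverse hP hne hne₁₃ h₁₃ h₃Q'
        ha hb hc
    by_cases hy : ¬G.Adj y g ∧ y ≠ g
    · exact hS.false_of_corner_detour hgg' hg'y.symm hy.1 hy.2 hQ.reverse hP hne hne₁₃ h₁₃ h₃Q'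
        ha hb hc
    obtain ⟨hxg, hyg⟩ := adj_and_adj_of_not_adj (v := g) hxy hxy' (by tauto) (by tauto)
    exact hS.false_of_two_detours hxg hyg hg'y.symm hgg' hxy hxy' hg'x.ne' hQ hR hne
      hne₁₃ hne₂₃ h₁₂ h₁R h₃Q ha hb hc

theorem IsMPSet.false_of_mem_isInducedPathFromTo (hS : (G □ H).IsMPSet S) {g g' : α}
    {Q : List β} {h₁ h₂ h₃ : β} (hgg' : G.Adj g g') (hQ : H.IsInducedPathFromTo h₁ h₂ Q)
    (h₃Q : h₃ ∈ Q) (hne : h₁ ≠ h₂)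
    (ha : (g, h₁) ∈ S) (hb : (g, h₂) ∈ S) (hc : (g', h₃) ∈ S) : False := by
  by_cases h₃₁ : h₃ = h₁
  · subst h₃₁
    exact hS.false_of_corner hgg' hQ.reverse.toIsInducedPath hQ.reverse.getLast?_eq
      (.singleton h₃) (List.disjoint_nil_right _) hQ.reverse.end_mem hQ.reverse.start_mem
      (List.mem_singleton_self _) hne ha hb hc
  by_cases h₃₂ : h₃ = h₂
  · subst h₃₂
    exact hS.false_of_corner hgg' hQ.toIsInducedPath hQ.getLast?_eq (.singleton h₃)
      (List.disjoint_nil_right _) hQ.start_mem hQ.end_mem (List.mem_singleton_self _) hne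
      ha hb hc
  obtain ⟨Q₁, Q₂, rfl⟩ := List.append_of_mem h₃Q
  obtain ⟨P, p, rfl⟩ : ∃ P p, Q₁ = P ++ [p] := (List.eq_nil_or_concat' Q₁).resolve_left
    fun h => h₃₁ (by simpa [h] using hQ.head?_eq)
  exact hS.false_of_hop hgg' (by simpa using hQ) h₃₂ ha hb hc

theorem IsMPSet.false_of_two_layers (hS : (G □ H).IsMPSet S) (hH : H.Connected)
    {g g' x y : α} {h₁ h₂ h₃ : β} (hgg' : G.Adj g g') (hxy : ¬G.Adj x y) (hxy' : x ≠ y)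
    (hu : (G.Adj g x ∧ G.Adj g y) ∨ (G.Adj g' x ∧ G.Adj g' y)) (hne : h₁ ≠ h₂)
    (ha : (g, h₁) ∈ S) (hb : (g, h₂) ∈ S) (hc : (g', h₃) ∈ S) : False := by
  obtain ⟨Q, hQ⟩ := hH.exists_isInducedPathFromTo h₁ h₂
  obtain ⟨R, hR⟩ := hH.exists_isInducedPathFromTo h₂ h₃
  by_cases h₃Q : h₃ ∈ Q
  · exact hS.false_of_mem_isInducedPathFromTo hgg' hQ h₃Q hne ha hb hc
  by_cases h₁R : h₁ ∈ R
  · obtain ⟨R₁, R₂, rfl⟩ := List.append_of_mem h₁R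
    obtain ⟨hR₁, hR₂⟩ := hR.split
    have hdisj : (R₁ ++ [h₁]).Disjoint R₂ :=
      List.disjoint_of_nodup_append (by simpa using hR.nodup)
    exact hS.false_of_corner hgg' hR₁.toIsInducedPath hR₁.getLast?_eq hR₂.toIsInducedPath
      hdisj hR₁.end_mem hR₁.start_mem hR₂.end_mem hne ha hb hc
  by_cases h₁₂ : H.Adj h₁ h₂
  · obtain ⟨M, rfl⟩ := List.head?_eq_some_iff.mp hR.head?_eq
    have hdisj : [h₁, h₂].Disjoint M := by
      simpa [List.disjoint_cons_left] using ⟨fun h => h₁R (List.mem_cons_of_mem _ h),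
        (List.nodup_cons.mp hR.nodup).1⟩
    exact hS.false_of_corner hgg' (.pair h₁₂) rfl hR.toIsInducedPath hdisj (by simp) (by simp)
      hR.end_mem hne ha hb hc
  by_cases h₁₃ : H.Adj h₁ h₃
  · exact hS.false_of_corner hgg' hQ.reverse.toIsInducedPath hQ.reverse.getLast?_eq
      (.pair h₁₃) (by simpa using h₃Q) hQ.reverse.end_mem hQ.reverse.start_mem (by simp) hne
      ha hb hc
  exact hS.false_of_two_layers_of_not_adj hH hgg' hxy hxy' hu hQ hR h₃Q h₁R hne h₁₂ h₁₃ ha hb hc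

end TwoLayers

section CliqueNum

theorem IsClique.ncard_le_cliqueNum [Finite α] {s : Set α} (h : G.IsClique s) :
    s.ncard ≤ G.cliqueNum := by
  obtain ⟨t, rfl⟩ := s.toFinite.exists_finset_coe
  rw [Set.ncard_coe_finset]
  exact IsClique.card_le_cliqueNum (tc := h)

theorem Adj.two_le_cliqueNum [Finite α] {a b : α} (h : G.Adj a b) : 2 ≤ G.cliqueNum := by
  rw [← Set.ncard_pair h.ne]
  exact (isClique_pair.mpr fun _ => h).ncard_le_cliqueNum

theorem exists_mem_mem_ne_of_cliqueNum_lt [Finite α] (hS : G.IsClique (Prod.fst '' S))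
    (hlt : G.cliqueNum < S.ncard) : ∃ g h₁ h₂, (g, h₁) ∈ S ∧ (g, h₂) ∈ S ∧ h₁ ≠ h₂ := by
  by_contra! h
  have hinj : Set.InjOn Prod.fst S := fun a ha b hb hab =>
    Prod.ext hab (h a.1 a.2 b.2 ha (by simpa [hab] using hb))
  have := hS.ncard_le_cliqueNum
  rw [hinj.ncard_image] at this
  omega

theorem IsMPSet.ncard_le_cliqueNum_of_forall_fst_eq [Finite β] (hS : (G □ H).IsMPSet S)
    (hH : H.Connected) {u x y : α} (hux : G.Adj u x) (huy : G.Adj u y) (hxy : ¬G.Adj x y)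
    (hxy' : x ≠ y) (hlayer : ∀ s ∈ S, s.1 = u) (hS3 : 2 < S.ncard) : S.ncard ≤ H.cliqueNum := by
  set T := {t | (u, t) ∈ S}
  have hST : Prod.mk u '' T = S := by
    ext s
    refine ⟨fun ⟨t, ht, hs⟩ => hs ▸ ht, fun hs => ⟨s.2, ?_, ?_⟩⟩
    · simpa [T, ← hlayer s hs] using hs
    · rw [← hlayer s hs]
  have hTS : T.ncard = S.ncard := by
    rw [← hST, Set.ncard_image_of_injective _ (Prod.mk_right_injective u)]
  suffices H.IsClique T from hTS ▸ this.ncard_le_cliqueNum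
  intro t₁ ht₁ t₂ ht₂ hne
  obtain ⟨t₃, ht₃, ht₃'⟩ := Set.exists_mem_notMem_of_ncard_lt_ncard (s := {t₁, t₂}) (t := T)
    (by rw [Set.ncard_pair hne]; omega)
  simp only [Set.mem_insert_iff, Set.mem_singleton_iff, not_or] at ht₃'
  exact hS.adj_of_mem_layer hH hux huy hxy hxy' hne (Ne.symm ht₃'.1) (Ne.symm ht₃'.2) ht₁ ht₂ ht₃

end CliqueNum

end BoxProd

end SimpleGraph

theorem mpSet_fst_clique_simplicial_general {α β : Type*} [Fintype α] [Fintype β]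
    (G : SimpleGraph α) (H : SimpleGraph β) (hH : H.Connected)
    (S : Set (α × β)) (hS : (G □ H).IsMPSet S)
    (hbig : max G.cliqueNum H.cliqueNum < S.ncard)
    (hclique : G.IsClique (Prod.fst '' S)) :
    ∀ u ∈ Prod.fst '' S, G.IsClique (G.neighborSet u) := by
  intro u hu x hx y hy hxy'
  by_contra hxy
  have hωG := le_max_left G.cliqueNum H.cliqueNum
  have hωH := le_max_right G.cliqueNum H.cliqueNum
  obtain ⟨g, h₁, h₂, ha, hb, hne⟩ := exists_mem_mem_ne_of_cliqueNum_lt hclique (by omega)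
  have hgg' {c : α × β} (hc : c ∈ S) (hcg : c.1 ≠ g) : G.Adj g c.1 :=
    hclique ⟨_, ha, rfl⟩ ⟨c, hc, rfl⟩ hcg.symm
  by_cases hug : u = g
  · subst hug
    by_cases hlayer : ∀ s ∈ S, s.1 = u
    · have h2 := Adj.two_le_cliqueNum (G := G) hx
      have := hS.ncard_le_cliqueNum_of_forall_fst_eq hH hx hy hxy hxy' hlayer (by omega)
      omega
    obtain ⟨c, hc, hcu⟩ : ∃ c ∈ S, c.1 ≠ u := by simpa using hlayer
    exact hS.false_of_two_layers hH (hgg' hc hcu) hxy hxy' (.inl ⟨hx, hy⟩) hne ha hb hc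
  · obtain ⟨c, hc, rfl⟩ := hu
    exact hS.false_of_two_layers hH (hgg' hc hug) hxy hxy' (.inr ⟨hx, hy⟩) hne ha hb hc

/-- If `S` is a monophonic position set of `G □ H` with
`|S| > max {ω(G), ω(H)}` such that `π_G(S)` induces a clique in `G`, then every
vertex of `π_G(S)` is a simplicial vertex of `G`. -/
theorem mpSet_fst_clique_simplicial {α β : Type*} [Fintype α] [Fintype β]
    (G : SimpleGraph α) (H : SimpleGraph β) (hG : G.Connected) (hH : H.Connected)
    (S : Set (α × β)) (hS : (G □ H).IsMPSet S)
    (hbig : max G.cliqueNum H.cliqueNum < S.ncard)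
    (hclique : G.IsClique (Prod.fst '' S)) :
    ∀ u ∈ Prod.fst '' S, G.IsClique (G.neighborSet u) :=
  mpSet_fst_clique_simplicial_general G H hH S hS hbig hclique
end
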